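/- arXiv:2212.02323 — 2 statements merged into one kernel-verified Lean document; each statement's English description precedes it below -/
import Mathlib

section
/- Let M, N be m×m real symmetric positive semidefinite matrices. Then the spectral norm of their Hadamard product satisfies ‖M∘N‖ ≤ (max_{j∈[m]} M_{jj}) · ‖N‖. -/
/-!
Since `N` is symmetric, `‖N‖ • 1 - N` is positive semidefinite, so by the Schur product theorem
`M ∘ N ≤ ‖N‖ • (M ∘ 1) = ‖N‖ • diag(M₁₁, …, Mₘₘ) ≤ (max_j M_jj) ‖N‖ • 1`
in the Loewner order. As `M ∘ N` is itself positive semidefinite, its norm is at most that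
constant.
-/

open scoped BigOperators

/-- The Euclidean norm of a finitely supported real vector. -/
noncomputable def eNorm {β : Type*} [Fintype β] (v : β → ℝ) : ℝ :=
  Real.sqrt (∑ i, v i ^ 2)

/-- The spectral norm of a real matrix: `‖M‖ = max_{ξ ∈ S^{m-1}} ‖Mξ‖`. -/
noncomputable def specNorm {α β : Type*} [Fintype α] [Fintype β]
    (M : Matrix α β ℝ) : ℝ :=
  ⨆ ξ : {v : β → ℝ // eNorm v = 1}, eNorm (M.mulVec ξ.1)

open scoped Matrix Matrix.Norms.L2Operator MatrixOrder ComplexOrder RealInnerProductSpace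

lemma EuclideanSpace.ofLp_dotProduct_self {n : Type*} [Fintype n] (x : EuclideanSpace ℝ n) :
    x.ofLp ⬝ᵥ x.ofLp = ‖x‖ ^ 2 := by
  rw [← real_inner_self_eq_norm_sq, EuclideanSpace.inner_eq_star_dotProduct, star_trivial]

namespace Matrix

section Order

variable {𝕜 n : Type*} [RCLike 𝕜]

lemma diagonal_mono [DecidableEq n] {d e : n → 𝕜} (hde : d ≤ e) :
    diagonal d ≤ diagonal e := by
  rw [le_iff, diagonal_sub, posSemidef_diagonal_iff]
  exact sub_nonneg.2 hde

lemma PosSemidef.hadamard_mono {M A B : Matrix n n 𝕜} (hM : M.PosSemidef) (hAB : A ≤ B) :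
    M ⊙ A ≤ M ⊙ B := by
  have hsub : M ⊙ B - M ⊙ A = M ⊙ (B - A) := by ext; simp [mul_sub]
  rw [le_iff, hsub]
  exact hM.hadamard (le_iff.1 hAB)

end Order

section Real

variable {n : Type*} [Fintype n] [DecidableEq n]

lemma IsHermitian.le_smul_one_iff {A : Matrix n n ℝ} (hA : A.IsHermitian) {c : ℝ} :
    A ≤ c • 1 ↔ ∀ x, x ⬝ᵥ A *ᵥ x ≤ c * (x ⬝ᵥ x) := by
  simp only [le_iff, posSemidef_iff_dotProduct_mulVec, (isHermitian_one.smul (.all c)).sub hA,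
    true_and, star_trivial, sub_mulVec, smul_mulVec, one_mulVec, dotProduct_sub, dotProduct_smul,
    smul_eq_mul, sub_nonneg]

lemma dotProduct_mulVec_le_l2_opNorm_mul (A : Matrix n n ℝ) (x : n → ℝ) :
    x ⬝ᵥ A *ᵥ x ≤ ‖A‖ * (x ⬝ᵥ x) := by
  have hx : x ⬝ᵥ x = ‖WithLp.toLp 2 x‖ ^ 2 := EuclideanSpace.ofLp_dotProduct_self _
  rw [← inner_toEuclideanCLM, hx, ← l2_opNorm_toEuclideanCLM]
  grw [real_inner_le_norm, ContinuousLinearMap.le_opNorm]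
  exact le_of_eq (by ring)

lemma IsHermitian.le_l2_opNorm_smul_one {A : Matrix n n ℝ} (hA : A.IsHermitian) :
    A ≤ ‖A‖ • 1 :=
  hA.le_smul_one_iff.2 (dotProduct_mulVec_le_l2_opNorm_mul A)

lemma PosSemidef.l2_opNorm_le_of_le_smul_one {A : Matrix n n ℝ} {c : ℝ} (hA : A.PosSemidef)
    (hc : 0 ≤ c) (hAc : A ≤ c • 1) : ‖A‖ ≤ c := by
  set T := toEuclideanCLM (𝕜 := ℝ) A
  have hT : T.IsSymmetric :=
    (IsSelfAdjoint.map hA.isHermitian.isSelfAdjoint toEuclideanCLM).isSymmetric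
  rw [← l2_opNorm_toEuclideanCLM, T.norm_eq_iSup_rayleighQuotient hT]
  refine ciSup_le fun y ↦ ?_
  have hTy : ⟪T y, y⟫ = y.ofLp ⬝ᵥ A *ᵥ y.ofLp := by
    rw [real_inner_comm, inner_toEuclideanCLM]
  have hnonneg : 0 ≤ ⟪T y, y⟫ := by simpa [hTy] using hA.dotProduct_mulVec_nonneg y.ofLp
  have hle : ⟪T y, y⟫ ≤ c * ‖y‖ ^ 2 := by
    rw [hTy, ← EuclideanSpace.ofLp_dotProduct_self]
    exact hA.isHermitian.le_smul_one_iff.1 hAc y.ofLp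
  rw [ContinuousLinearMap.rayleighQuotient, ContinuousLinearMap.reApplyInnerSelf_apply,
    RCLike.re_to_real, abs_of_nonneg (by positivity)]
  exact div_le_of_le_mul₀ (sq_nonneg _) hc hle

lemma PosSemidef.l2_opNorm_hadamard_le {M N : Matrix n n ℝ} (hM : M.PosSemidef)
    (hN : N.PosSemidef) : ‖M ⊙ N‖ ≤ (⨆ j, M j j) * ‖N‖ := by
  set d := ⨆ j, M j j
  have hd : 0 ≤ d := Real.iSup_nonneg fun _ ↦ hM.diag_nonneg
  have hdiag : ∀ j, M j j ≤ d := le_ciSup (Set.finite_range _).bddAbove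
  refine (hM.hadamard hN).l2_opNorm_le_of_le_smul_one (by positivity) ?_
  calc M ⊙ N ≤ M ⊙ (‖N‖ • 1) := hM.hadamard_mono hN.isHermitian.le_l2_opNorm_smul_one
    _ = diagonal fun j ↦ ‖N‖ * M j j := by
      rw [hadamard_smul, hadamard_one, ← diagonal_smul]; rfl
    _ ≤ diagonal fun _ ↦ d * ‖N‖ := diagonal_mono fun j ↦ by
      rw [mul_comm]; exact mul_le_mul_of_nonneg_right (hdiag j) (norm_nonneg _)
    _ = (d * ‖N‖) • 1 := (smul_one_eq_diagonal _).symm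

end Real

end Matrix

lemma eNorm_eq_norm_toLp {β : Type*} [Fintype β] (v : β → ℝ) :
    eNorm v = ‖WithLp.toLp 2 v‖ := by
  simp [eNorm, EuclideanSpace.norm_eq]

lemma specNorm_eq_l2_opNorm {α β : Type*} [Fintype α] [Fintype β] [DecidableEq β]
    (A : Matrix α β ℝ) : specNorm A = ‖A‖ := by
  have hbound (ξ : {v : β → ℝ // eNorm v = 1}) : eNorm (A *ᵥ ξ.1) ≤ ‖A‖ := by
    have : ‖WithLp.toLp 2 (A *ᵥ ξ.1)‖ ≤ ‖A‖ * ‖WithLp.toLp 2 ξ.1‖ := by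
      simpa using A.l2_opNorm_mulVec (WithLp.toLp 2 ξ.1)
    rwa [← eNorm_eq_norm_toLp, ← eNorm_eq_norm_toLp, ξ.2, mul_one] at this
  refine le_antisymm (Real.iSup_le hbound (norm_nonneg _)) ?_
  rw [Matrix.l2_opNorm_def]
  refine ContinuousLinearMap.opNorm_le_of_unit_norm (Real.iSup_nonneg fun _ ↦ Real.sqrt_nonneg _)
    fun x hx ↦ ?_
  have hxξ : eNorm x.ofLp = 1 := by rwa [eNorm_eq_norm_toLp]
  have := le_ciSup (f := fun ξ : {v : β → ℝ // eNorm v = 1} ↦ eNorm (A *ᵥ ξ.1))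
    ⟨‖A‖, Set.forall_mem_range.2 hbound⟩ ⟨x.ofLp, hxξ⟩
  rwa [eNorm_eq_norm_toLp] at this

/-- For `m × m` real symmetric positive semidefinite matrices `M, N`,
the spectral norm of the Hadamard product satisfies
`‖M ∘ N‖ ≤ (max_j M_jj) ⬝ ‖N‖`. -/
theorem hadamard_specNorm_le {m : ℕ} (M N : Matrix (Fin m) (Fin m) ℝ)
    (hM : M.PosSemidef) (hN : N.PosSemidef) :
    specNorm (Matrix.hadamard M N) ≤ (⨆ j : Fin m, M j j) * specNorm N := by
  rw [specNorm_eq_l2_opNorm, specNorm_eq_l2_opNorm]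
  exact hM.l2_opNorm_hadamard_le hN
end

section
/- Fix X ∈ ℝ^{n×m}, y ∈ ℝ^m and rates η_w, η_z ≥ 0, and let ℓ(W,z) = (1/2)‖σ(WX)^⊤z − y‖². Suppose (W(t), z(t)) is a differentiable curve on an interval I such that every point (W(t), z(t)) is regular and the gradient flow equations Ẇ(t) = −η_w ∇_W ℓ(W(t),z(t)) and ż(t) = −η_z ∇_z ℓ(W(t),z(t)) hold on I. Then for every neuron ν ∈ [S], the quantity η_w·z_ν(t)² − η_z·‖W_ν(t)‖² is constant on I, where W_ν(t) ∈ ℝ^n denotes the ν-th row of W(t). -/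
/-!
Since `relu t = 1(t > 0) · t`, pairing the `z`-gradient of neuron `ν` with `z_ν` and the
`W`-gradient of its row with `W_ν` yields the same sum `z_ν ∑_j σ((WX)_{νj}) e_j`.
Hence `d/dt (η_w z_ν² − η_z ‖W_ν‖²) = −2 η_w η_z (z_ν (∇_z ℓ)_ν − ⟨W_ν, (∇_W ℓ)_ν⟩) = 0`,
and a function with zero derivative on a convex set is constant.
-/

open scoped BigOperators

/-- The ReLU activation function. -/
noncomputable def relu (t : ℝ) : ℝ := max t 0

/-- The `W`-gradient of the loss `ℓ(W,z) = (1/2)‖σ(WX)ᵀz − y‖²` at regular points: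
`(∇_W ℓ)_{νi} = z_ν ∑_j 1((WX)_{νj} > 0) e_j X_{ij}` where `e = σ(WX)ᵀz − y`. -/
noncomputable def gradW {n m S : ℕ} (X : Fin n → Fin m → ℝ) (y : Fin m → ℝ)
    (W : Fin S → Fin n → ℝ) (z : Fin S → ℝ) : Fin S → Fin n → ℝ :=
  fun ν i => z ν * ∑ j, (if 0 < ∑ i', W ν i' * X i' j then (1 : ℝ) else 0) *
      ((∑ μ, relu (∑ i', W μ i' * X i' j) * z μ) - y j) * X i j

/-- The `z`-gradient of the loss at regular points:
`(∇_z ℓ)_ν = ∑_j σ((WX)_{νj}) e_j` where `e = σ(WX)ᵀz − y`. -/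
noncomputable def gradz {n m S : ℕ} (X : Fin n → Fin m → ℝ) (y : Fin m → ℝ)
    (W : Fin S → Fin n → ℝ) (z : Fin S → ℝ) : Fin S → ℝ :=
  fun ν => ∑ j, relu (∑ i, W ν i * X i j) *
      ((∑ μ, relu (∑ i', W μ i' * X i' j) * z μ) - y j)

open Finset

theorem relu_eq_ite_mul (t : ℝ) : relu t = (if 0 < t then 1 else 0) * t := by
  unfold relu
  split_ifs with ht
  · simp [ht.le]
  · simp [not_lt.1 ht]

theorem mul_gradz_eq_sum_mul_gradW {n m S : ℕ} (X : Fin n → Fin m → ℝ) (y : Fin m → ℝ)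
    (W : Fin S → Fin n → ℝ) (z : Fin S → ℝ) (ν : Fin S) :
    z ν * gradz X y W z ν = ∑ i, W ν i * gradW X y W z ν i := by
  simp only [gradz, gradW, mul_sum]
  rw [sum_comm]
  refine sum_congr rfl fun j _ => ?_
  rw [relu_eq_ite_mul]
  simp only [mul_sum, sum_mul]
  exact sum_congr rfl fun i _ => by ring

theorem Convex.eq_of_hasDerivWithinAt_zero {s : Set ℝ} (hs : Convex ℝ s) {f : ℝ → ℝ}
    (hf : ∀ t ∈ s, HasDerivWithinAt f 0 s t) {x y : ℝ} (hx : x ∈ s) (hy : y ∈ s) :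
    f x = f y := by
  have h := hs.norm_image_sub_le_of_norm_hasDerivWithin_le (C := 0) hf (fun _ _ => by simp) hx hy
  rw [zero_mul, norm_le_zero_iff, sub_eq_zero] at h
  exact h.symm

theorem HasDerivWithinAt.sum_sq {ι : Type*} [Fintype ι] {f : ℝ → ι → ℝ} {f' : ι → ℝ}
    {s : Set ℝ} {t : ℝ} (hf : HasDerivWithinAt f f' s t) :
    HasDerivWithinAt (fun u => ∑ i, f u i ^ 2) (2 * ∑ i, f t i * f' i) s t := by
  rw [mul_sum]
  refine HasDerivWithinAt.fun_sum fun i _ => ?_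
  refine ((hasDerivWithinAt_pi.1 hf i).fun_pow 2).congr_deriv ?_
  norm_num
  ring

theorem hasDerivWithinAt_balance_eq_zero {ι : Type*} [Fintype ι] {z : ℝ → ℝ} {w : ℝ → ι → ℝ}
    {a ηw ηz : ℝ} {b : ι → ℝ} {s : Set ℝ} {t : ℝ}
    (hz : HasDerivWithinAt z (-(ηz * a)) s t) (hw : HasDerivWithinAt w (-(ηw • b)) s t)
    (hab : z t * a = ∑ i, w t i * b i) :
    HasDerivWithinAt (fun u => ηw * z u ^ 2 - ηz * ∑ i, w u i ^ 2) 0 s t := by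
  refine (((hz.pow 2).const_mul ηw).sub (hw.sum_sq.const_mul ηz)).congr_deriv ?_
  have hwb : ∑ i, w t i * (-(ηw • b)) i = -(ηw * (z t * a)) := by
    simp only [hab, Pi.neg_apply, Pi.smul_apply, smul_eq_mul, mul_neg, sum_neg_distrib, mul_sum]
    exact congrArg _ (sum_congr rfl fun i _ => by ring)
  rw [hwb]
  norm_num
  ring

theorem gradient_flow_invariant_general {n m S : ℕ} (X : Fin n → Fin m → ℝ) (y : Fin m → ℝ)
    (ηw ηz : ℝ)
    (I : Set ℝ) (hI : Convex ℝ I)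
    (W : ℝ → Fin S → Fin n → ℝ) (z : ℝ → Fin S → ℝ)
    (hflowW : ∀ t ∈ I, HasDerivWithinAt W (-(ηw • gradW X y (W t) (z t))) I t)
    (hflowz : ∀ t ∈ I, HasDerivWithinAt z (-(ηz • gradz X y (W t) (z t))) I t) :
    ∀ ν : Fin S, ∀ t ∈ I, ∀ t' ∈ I,
      ηw * z t ν ^ 2 - ηz * ∑ i, W t ν i ^ 2 =
        ηw * z t' ν ^ 2 - ηz * ∑ i, W t' ν i ^ 2 := by
  intro ν t ht t' ht'
  refine hI.eq_of_hasDerivWithinAt_zero (f := fun u => ηw * z u ν ^ 2 - ηz * ∑ i, W u ν i ^ 2)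
    (fun s hs => ?_) ht ht'
  exact hasDerivWithinAt_balance_eq_zero (hasDerivWithinAt_pi.1 (hflowz s hs) ν)
    (hasDerivWithinAt_pi.1 (hflowW s hs) ν) (mul_gradz_eq_sum_mul_gradW X y (W s) (z s) ν)

/-- Along any differentiable curve `(W(t), z(t))` on an interval `I`
consisting of regular points and satisfying the two-rate gradient flow equations
`Ẇ = −η_w ∇_W ℓ`, `ż = −η_z ∇_z ℓ`, the quantity `η_w z_ν(t)² − η_z ‖W_ν(t)‖²` is
constant on `I`, for every neuron `ν`. -/
theorem gradient_flow_invariant {n m S : ℕ} (X : Fin n → Fin m → ℝ) (y : Fin m → ℝ)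
    (ηw ηz : ℝ) (hηw : 0 ≤ ηw) (hηz : 0 ≤ ηz)
    (I : Set ℝ) (hI : Convex ℝ I)
    (W : ℝ → Fin S → Fin n → ℝ) (z : ℝ → Fin S → ℝ)
    (hreg : ∀ t ∈ I, ∀ ν j, (∑ i, W t ν i * X i j) ≠ 0)
    (hflowW : ∀ t ∈ I, HasDerivWithinAt W (-(ηw • gradW X y (W t) (z t))) I t)
    (hflowz : ∀ t ∈ I, HasDerivWithinAt z (-(ηz • gradz X y (W t) (z t))) I t) :
    ∀ ν : Fin S, ∀ t ∈ I, ∀ t' ∈ I,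
      ηw * z t ν ^ 2 - ηz * ∑ i, W t ν i ^ 2 =
        ηw * z t' ν ^ 2 - ηz * ∑ i, W t' ν i ^ 2 :=
  gradient_flow_invariant_general X y ηw ηz I hI W z hflowW hflowz
end
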